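/- Let Q be a finite acyclic quiver, V a finite-dimensional representation of Q, and for each non-lazy path \omega of Q define \overline{V}_\omega = \bigoplus_{\alpha \in \omega} \{ x + V_\alpha(x) : x \in V_{s(\alpha)} \} \subseteq \bigoplus_{p \in \omega} V_p (sum over the arrows appearing in \omega), and \overline{V}_\omega = 0 for lazy paths. Then for each non-lazy path \omega the sum \bigoplus_{\alpha \in \omega} \{ x + V_\alpha(x) \} is direct, and dim \overline{V}_\omega = \sum_{p \in \omega, p \ne t(\omega)} dim V_p; moreover the spaces \overline{V}_\omega form a subrepresentation of M(V_*) over \overline{Q}/I (i.e., they are compatible with the inclusion maps). -/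

import Mathlib

/- STATEMENT 19: Let Q be a finite acyclic quiver, V a finite-dimensional representation of
Q, and for each path ω of Q define V̄_ω = ⊕_{α ∈ ω} { x + V_α(x) : x ∈ V_{s(α)} } inside
⊕_{p ∈ ω} V_p (and V̄_ω = 0 for lazy paths).  Then the sum of the graphs is direct,
dim V̄_ω = Σ_{p ∈ ω, p ≠ t(ω)} dim V_p, and the spaces V̄_ω are compatible with the
inclusion maps induced by extending the path on either side, i.e. they form a
subrepresentation of M(V_*) over Q̄/I.

The ambient space is ⊕_p V_p (as a Π-type over the finite vertex set), in which the graph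
of V_α is the range of x ↦ (single_{s α} x + single_{t α} (V_α x)). -/

open Quiver

set_option synthInstance.maxHeartbeats 400000
set_option maxHeartbeats 1000000

/-- The set of arrows of `Q`. -/
abbrev Arr (Q : Type) [Quiver.{0} Q] : Type := Σ i j : Q, i ⟶ j

section

variable (k : Type) [Field k] (Q : Type) [Quiver.{0} Q] [DecidableEq Q]
  (V : Q → Type) [∀ p, AddCommGroup (V p)] [∀ p, Module k (V p)]
  (Vf : ∀ {i j : Q}, (i ⟶ j) → (V i →ₗ[k] V j))

/-- The list of arrows appearing in a path. -/
def arrowsOf : ∀ {i j : Q}, Path i j → List (Arr Q)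
  | _, _, Path.nil => []
  | _, _, @Path.cons _ _ _ b c p e => (⟨b, c, e⟩ : Arr Q) :: arrowsOf p

/-- The list of vertices through which a path passes. -/
def vertsOf : ∀ {i j : Q}, Path i j → List Q
  | i, _, Path.nil => [i]
  | _, _, @Path.cons _ _ _ _ c p _ => c :: vertsOf p

/-- The graph of `V_α` inside `⊕_p V_p`: the range of
`x ↦ single_{s α} x + single_{t α} (V_α x)`. -/
noncomputable def graphMap (ar : Arr Q) : V ar.1 →ₗ[k] (∀ p : Q, V p) :=
  LinearMap.single k V ar.1 + (LinearMap.single k V ar.2.1).comp (Vf ar.2.2)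

/-- `V̄_ω = ⊕_{α ∈ ω} { x + V_α(x) }` (which is `0` for lazy paths). -/
noncomputable def Vbar {i j : Q} (ω : Path i j) : Submodule k (∀ p : Q, V p) :=
  ⨆ ar ∈ arrowsOf Q ω, LinearMap.range (graphMap k Q V @Vf ar)

/-! Peel off the last arrow `e : b ⟶ c` of the path. By acyclicity `c` is not a vertex of the
shorter path `p`, so every vector of `V̄_p` vanishes at `c`. Induction then shows that `V̄_p`
contains no nonzero vector supported at the target `b` alone; hence the graph of `V_e`, whose
vectors in `V̄_p` must vanish at `c` and so are supported at `b`, meets `V̄_p` trivially. This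
gives both the independence of the graphs and `dim V̄_{p.cons e} = dim V_b + dim V̄_p`. -/

omit [DecidableEq Q] in
lemma arrowsOf_comp {a b c : Q} (p : Path a b) (q : Path b c) :
    arrowsOf Q (p.comp q) = arrowsOf Q q ++ arrowsOf Q p := by
  induction q with
  | nil => simp [arrowsOf]
  | cons q e ih => simp [Path.comp_cons, arrowsOf, ih]

omit [DecidableEq Q] in
lemma target_mem_vertsOf {a b : Q} (p : Path a b) : b ∈ vertsOf Q p := by
  cases p <;> simp [vertsOf]

omit [DecidableEq Q] in
lemma mem_vertsOf_of_mem_arrowsOf {a b : Q} {p : Path a b} {ar : Arr Q}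
    (h : ar ∈ arrowsOf Q p) : ar.1 ∈ vertsOf Q p ∧ ar.2.1 ∈ vertsOf Q p := by
  induction p with
  | nil => simp [arrowsOf] at h
  | cons p e ih =>
    simp only [arrowsOf, List.mem_cons] at h
    rcases h with rfl | h
    · simp [vertsOf, target_mem_vertsOf]
    · simp [vertsOf, ih h]

omit [DecidableEq Q] in
lemma nonempty_path_of_mem_vertsOf {a b v : Q} {p : Path a b} (h : v ∈ vertsOf Q p) :
    Nonempty (Path v b) := by
  induction p with
  | nil =>
    rw [vertsOf, List.mem_singleton] at h
    exact ⟨h ▸ Path.nil⟩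
  | cons p e ih =>
    rw [vertsOf, List.mem_cons] at h
    rcases h with rfl | h
    · exact ⟨Path.nil⟩
    · obtain ⟨q⟩ := ih h
      exact ⟨q.cons e⟩

omit [DecidableEq Q] in
lemma notMem_vertsOf_of_hom (hacyclic : ∀ (a : Q) (p : Path a a), p = Path.nil)
    {a b c : Q} (p : Path a b) (e : b ⟶ c) : c ∉ vertsOf Q p := fun hc => by
  obtain ⟨q⟩ := nonempty_path_of_mem_vertsOf Q hc
  simpa using congrArg Path.length (hacyclic c (q.cons e))

lemma graphMap_apply (ar : Arr Q) (x : V ar.1) :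
    graphMap k Q V @Vf ar x = Pi.single ar.1 x + Pi.single ar.2.1 (Vf ar.2.2 x) := rfl

lemma graphMap_injective {ar : Arr Q} (h : ar.1 ≠ ar.2.1) :
    Function.Injective (graphMap k Q V @Vf ar) := by
  rw [← LinearMap.ker_eq_bot, LinearMap.ker_eq_bot']
  intro x hx
  simpa [graphMap_apply, Pi.single_eq_of_ne h] using congrFun hx ar.1

lemma Vbar_nil (a : Q) : Vbar k Q V @Vf (Path.nil : Path a a) = ⊥ := by
  simp [Vbar, arrowsOf]

lemma Vbar_cons {a b c : Q} (p : Path a b) (e : b ⟶ c) :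
    Vbar k Q V @Vf (p.cons e) =
      LinearMap.range (graphMap k Q V @Vf ⟨b, c, e⟩) ⊔ Vbar k Q V @Vf p := by
  simp [Vbar, arrowsOf, iSup_or, iSup_sup_eq]

lemma Vbar_mono {a b a' b' : Q} {p : Path a b} {q : Path a' b'}
    (h : arrowsOf Q p ⊆ arrowsOf Q q) : Vbar k Q V @Vf p ≤ Vbar k Q V @Vf q :=
  biSup_mono fun _ hp => h hp

open Classical in
lemma Vbar_eq_sup {a b : Q} (p : Path a b) :
    Vbar k Q V @Vf p =
      (arrowsOf Q p).toFinset.sup fun ar => LinearMap.range (graphMap k Q V @Vf ar) := by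
  simp [Vbar, Finset.sup_eq_iSup, List.mem_toFinset]

lemma apply_eq_zero_of_mem_Vbar {a b v : Q} {p : Path a b} {u : ∀ q : Q, V q}
    (hu : u ∈ Vbar k Q V @Vf p) (hv : v ∉ vertsOf Q p) : u v = 0 := by
  suffices Vbar k Q V @Vf p ≤ LinearMap.ker (LinearMap.proj v) from this hu
  refine iSup₂_le fun ar har => ?_
  rintro _ ⟨x, rfl⟩
  obtain ⟨hs, ht⟩ := mem_vertsOf_of_mem_arrowsOf Q har
  simp [graphMap_apply, Pi.single_eq_of_ne (ne_of_mem_of_not_mem hs hv).symm,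
    Pi.single_eq_of_ne (ne_of_mem_of_not_mem ht hv).symm]

lemma eq_zero_of_mem_Vbar_of_apply_eq_zero (hacyclic : ∀ (a : Q) (p : Path a a), p = Path.nil)
    {a b : Q} (p : Path a b) {u : ∀ q : Q, V q} (hu : u ∈ Vbar k Q V @Vf p)
    (hub : ∀ v ≠ b, u v = 0) : u = 0 := by
  induction p generalizing u with
  | nil => simpa [Vbar_nil] using hu
  | @cons b c p e ih =>
    rw [Vbar_cons, Submodule.mem_sup] at hu
    obtain ⟨_, ⟨x, rfl⟩, w, hw, rfl⟩ := hu
    have hc := notMem_vertsOf_of_hom Q hacyclic p e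
    have hbc : b ≠ c := ne_of_mem_of_not_mem (target_mem_vertsOf Q p) hc
    have hw0 : w = 0 := by
      refine ih hw fun v hvb => ?_
      by_cases hvc : v = c
      · subst hvc
        exact apply_eq_zero_of_mem_Vbar k Q V @Vf hw hc
      · simpa [graphMap_apply, Pi.single_eq_of_ne hvb, Pi.single_eq_of_ne hvc] using hub v hvc
    have hx0 : x = 0 := by
      simpa [hw0, graphMap_apply, Pi.single_eq_of_ne hbc] using hub b hbc
    simp [hw0, hx0]

lemma disjoint_range_graphMap_Vbar (hacyclic : ∀ (a : Q) (p : Path a a), p = Path.nil)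
    {a b c : Q} (p : Path a b) (e : b ⟶ c) :
    Disjoint (LinearMap.range (graphMap k Q V @Vf ⟨b, c, e⟩)) (Vbar k Q V @Vf p) := by
  rw [Submodule.disjoint_def]
  rintro _ ⟨x, rfl⟩ hx
  have hc := notMem_vertsOf_of_hom Q hacyclic p e
  refine eq_zero_of_mem_Vbar_of_apply_eq_zero k Q V @Vf hacyclic p hx fun v hvb => ?_
  by_cases hvc : v = c
  · subst hvc
    exact apply_eq_zero_of_mem_Vbar k Q V @Vf hx hc
  · simp [graphMap_apply, Pi.single_eq_of_ne hvb, Pi.single_eq_of_ne hvc]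

open Classical in
lemma supIndep_range_graphMap (hacyclic : ∀ (a : Q) (p : Path a a), p = Path.nil)
    {a b : Q} (p : Path a b) :
    (arrowsOf Q p).toFinset.SupIndep fun ar => LinearMap.range (graphMap k Q V @Vf ar) := by
  induction p with
  | nil => simp [arrowsOf]
  | cons p e ih =>
    rw [arrowsOf, List.toFinset_cons]
    have hdisj := disjoint_range_graphMap_Vbar k Q V @Vf hacyclic p e
    rw [Vbar_eq_sup] at hdisj
    exact ih.insert hdisj

lemma iSupIndep_range_graphMap (hacyclic : ∀ (a : Q) (p : Path a a), p = Path.nil)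
    {a b : Q} (p : Path a b) :
    iSupIndep fun ar : {ar : Arr Q // ar ∈ arrowsOf Q p} =>
      LinearMap.range (graphMap k Q V @Vf ar.1) := by
  classical
  refine (supIndep_range_graphMap k Q V @Vf hacyclic p).independent.comp
    (f := fun ar : {ar : Arr Q // ar ∈ arrowsOf Q p} => ⟨ar.1, List.mem_toFinset.mpr ar.2⟩) ?_
  intro x y h
  simpa [Subtype.ext_iff] using h

lemma finrank_Vbar_cons [Fintype Q] [∀ p, FiniteDimensional k (V p)]
    (hacyclic : ∀ (a : Q) (p : Path a a), p = Path.nil) {a b c : Q} (p : Path a b) (e : b ⟶ c) :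
    Module.finrank k (Vbar k Q V @Vf (p.cons e)) =
      Module.finrank k (V b) + Module.finrank k (Vbar k Q V @Vf p) := by
  have hbc : b ≠ c :=
    ne_of_mem_of_not_mem (target_mem_vertsOf Q p) (notMem_vertsOf_of_hom Q hacyclic p e)
  have hsum := Submodule.finrank_sup_add_finrank_inf_eq
    (LinearMap.range (graphMap k Q V @Vf ⟨b, c, e⟩)) (Vbar k Q V @Vf p)
  rwa [(disjoint_range_graphMap_Vbar k Q V @Vf hacyclic p e).eq_bot, finrank_bot, add_zero,
    LinearMap.finrank_range_of_inj (graphMap_injective k Q V @Vf hbc), ← Vbar_cons] at hsum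

lemma finrank_Vbar [Fintype Q] [∀ p, FiniteDimensional k (V p)]
    (hacyclic : ∀ (a : Q) (p : Path a a), p = Path.nil) {a b : Q} (p : Path a b) :
    Module.finrank k (Vbar k Q V @Vf p) =
      ∑ v ∈ (vertsOf Q p).toFinset.erase b, Module.finrank k (V v) := by
  induction p with
  | nil => simp [Vbar_nil, vertsOf]
  | @cons b c p e ih =>
    have hc : c ∉ (vertsOf Q p).toFinset :=
      List.mem_toFinset.not.mpr (notMem_vertsOf_of_hom Q hacyclic p e)
    rw [finrank_Vbar_cons k Q V @Vf hacyclic, ih, vertsOf, List.toFinset_cons,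
      Finset.erase_insert hc]
    exact Finset.add_sum_erase _ (fun v => Module.finrank k (V v))
      (List.mem_toFinset.mpr (target_mem_vertsOf Q p))

/-- The sum defining `V̄_ω` is direct,
`dim V̄_ω = Σ_{p ∈ ω, p ≠ t(ω)} dim V_p`, and the subspaces `V̄_ω` are compatible with the
structure maps of `M(V_*)` given by extending the path at either end (so that they form a
subrepresentation of `M(V_*)` over `Q̄/I`). -/
theorem Vbar_direct_dim_subrep
    [Fintype Q] [∀ a b : Q, Fintype (a ⟶ b)] [∀ p, FiniteDimensional k (V p)]
    (hacyclic : ∀ (a : Q) (p : Path a a), p = Path.nil)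
    {i j : Q} (ω : Path i j) :
    iSupIndep
      (fun ar : {ar : Arr Q // ar ∈ arrowsOf Q ω} =>
        LinearMap.range (graphMap k Q V @Vf ar.1)) ∧
    Module.finrank k ↥(Vbar k Q V @Vf ω) =
      ∑ p ∈ (vertsOf Q ω).toFinset.erase j, Module.finrank k (V p) ∧
    (∀ {c : Q} (β : j ⟶ c), Vbar k Q V @Vf ω ≤ Vbar k Q V @Vf (ω.cons β)) ∧
    (∀ {c : Q} (α : c ⟶ i), Vbar k Q V @Vf ω ≤ Vbar k Q V @Vf ((α.toPath).comp ω)) := by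
  refine ⟨iSupIndep_range_graphMap k Q V @Vf hacyclic ω, finrank_Vbar k Q V @Vf hacyclic ω,
    fun β => Vbar_mono k Q V @Vf ?_, fun α => Vbar_mono k Q V @Vf ?_⟩
  · simp [arrowsOf]
  · simp [arrowsOf_comp]

end
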